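/- arXiv:2510.05460 — 6 statements merged into one kernel-verified Lean document; each statement's English description precedes it below -/
import Mathlib

section
/- Let c = log₂ 3. For all real numbers x, y with 0 < x ≤ y, we have 2·x^c + y^c ≤ (x + y)^c. -/
/-! Increments of the convex function `t ↦ t ^ c` over intervals of fixed length `x` grow with
the base point, so `(x + y) ^ c - y ^ c ≥ (2x) ^ c - x ^ c = (2 ^ c - 1) x ^ c = 2 x ^ c`. -/

open Real Set

theorem ConvexOn.map_add_sub_map_le {𝕜 : Type*} [Field 𝕜] [LinearOrder 𝕜] [IsStrictOrderedRing 𝕜]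
    {s : Set 𝕜} {f : 𝕜 → 𝕜} (hf : ConvexOn 𝕜 s f) {a b h : 𝕜} (ha : a ∈ s) (hb : b ∈ s)
    (hah : a + h ∈ s) (hbh : b + h ∈ s) (hab : a ≤ b) (h0 : 0 ≤ h) :
    f (a + h) - f a ≤ f (b + h) - f b := by
  rcases h0.eq_or_lt with rfl | h0
  · simp
  rcases hab.eq_or_lt with rfl | hab
  · rfl
  have left := hf.secant_mono ha hah hbh (by linarith) (by linarith) (by linarith)
  have right := hf.secant_mono hbh ha hb (by linarith) (by linarith) hab.le
  rw [add_sub_cancel_left] at left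
  rw [← neg_div_neg_eq, neg_sub, neg_sub, ← neg_div_neg_eq (f b - _), neg_sub, neg_sub,
    add_sub_cancel_left] at right
  exact (div_le_div_iff_of_pos_right h0).1 (left.trans right)

theorem two_rpow_sub_one_mul_rpow_add_rpow_le_add_rpow {p x y : ℝ} (hp : 1 ≤ p) (hx : 0 ≤ x)
    (hxy : x ≤ y) : (2 ^ p - 1) * x ^ p + y ^ p ≤ (x + y) ^ p := by
  have hy : 0 ≤ y := hx.trans hxy
  have h := (convexOn_rpow hp).map_add_sub_map_le (a := x) (b := y) (h := x) hx hy
    (by simp only [mem_Ici]; positivity) (by simp only [mem_Ici]; positivity) hxy hx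
  rw [← two_mul, mul_rpow zero_le_two hx, add_comm y] at h
  linarith

theorem stmt0 (x y : ℝ) (hx : 0 < x) (hxy : x ≤ y) :
    2 * x ^ Real.logb 2 3 + y ^ Real.logb 2 3 ≤ (x + y) ^ Real.logb 2 3 := by
  have h_two_rpow : (2 : ℝ) ^ logb 2 3 = 3 := rpow_logb two_pos (by norm_num) three_pos
  have h_one_le : 1 ≤ logb 2 3 := by
    rw [le_logb_iff_rpow_le one_lt_two three_pos, rpow_one]
    norm_num
  have h := two_rpow_sub_one_mul_rpow_add_rpow_le_add_rpow h_one_le hx.le hxy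
  rw [h_two_rpow] at h
  linarith
end

section
/- If f : ℝ → ℝ is non-decreasing on positive reals, f(1) = 1, and 2·f(x) + f(y) ≤ f(x + y) for all reals 0 < x ≤ y, then f(2^m) ≥ 3^m for every natural number m; in particular f(n) ≥ n^{log₂ 3} for infinitely many positive integers n. -/
/-!
Taking `x = y` in the inequality gives `3 f(x) ≤ f(2x)`; iterating from `f 1 = 1` yields
`3^m ≤ f(2^m)`, and `3^m = (2^m)^{log₂ 3}`.
-/

lemma pow_mul_le_apply_pow_mul {f : ℝ → ℝ} {a c : ℝ} (ha : 0 < a) (hc : 0 ≤ c)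
    (h : ∀ x, 0 < x → c * f x ≤ f (a * x)) {x : ℝ} (hx : 0 < x) (m : ℕ) :
    c ^ m * f x ≤ f (a ^ m * x) := by
  induction m with
  | zero => simp
  | succ m ih =>
    calc c ^ (m + 1) * f x = c * (c ^ m * f x) := by ring
      _ ≤ c * f (a ^ m * x) := mul_le_mul_of_nonneg_left ih hc
      _ ≤ f (a * (a ^ m * x)) := h _ (by positivity)
      _ = f (a ^ (m + 1) * x) := by ring_nf

lemma three_mul_le_apply_two_mul {f : ℝ → ℝ}
    (hsuper : ∀ x y : ℝ, 0 < x → x ≤ y → 2 * f x + f y ≤ f (x + y)) {x : ℝ} (hx : 0 < x) :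
    3 * f x ≤ f (2 * x) := by
  have := hsuper x x hx le_rfl
  rw [← two_mul] at this
  linarith

lemma pow_rpow_logb {b c : ℝ} (hb : 0 < b) (hb1 : b ≠ 1) (hc : 0 < c) (m : ℕ) :
    (b ^ m) ^ Real.logb b c = c ^ m := by
  rw [← Real.rpow_natCast_mul hb.le, mul_comm, Real.rpow_mul_natCast hb.le,
    Real.rpow_logb hb hb1 hc]

theorem stmt4_general (f : ℝ → ℝ)
    (hf1 : f 1 = 1)
    (hsuper : ∀ x y : ℝ, 0 < x → x ≤ y → 2 * f x + f y ≤ f (x + y)) :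
    (∀ m : ℕ, (3:ℝ) ^ m ≤ f (2 ^ m)) ∧
    {n : ℕ | 0 < n ∧ (n : ℝ) ^ Real.logb 2 3 ≤ f n}.Infinite := by
  have key (m : ℕ) : (3:ℝ) ^ m ≤ f (2 ^ m) := by
    have := pow_mul_le_apply_pow_mul (f := f) two_pos (by norm_num : (0:ℝ) ≤ 3)
      (fun _ hx => three_mul_le_apply_two_mul hsuper hx) one_pos m
    rwa [hf1, mul_one, mul_one] at this
  refine ⟨key, Set.infinite_of_injective_forall_mem (Nat.pow_right_injective le_rfl) fun m => ?_⟩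
  refine ⟨by positivity, ?_⟩
  rw [Nat.cast_pow, Nat.cast_ofNat, pow_rpow_logb two_pos (by norm_num) three_pos]
  exact key m

theorem stmt4 (f : ℝ → ℝ) (hmono : MonotoneOn f (Set.Ioi (0:ℝ)))
    (hf1 : f 1 = 1)
    (hsuper : ∀ x y : ℝ, 0 < x → x ≤ y → 2 * f x + f y ≤ f (x + y)) :
    (∀ m : ℕ, (3:ℝ) ^ m ≤ f (2 ^ m)) ∧
    {n : ℕ | 0 < n ∧ (n : ℝ) ^ Real.logb 2 3 ≤ f n}.Infinite :=
  stmt4_general f hf1 hsuper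
end

section
/- There exists a family of instances on the real line showing sum-distortion does not control max-distortion: for n ≥ 2 agents at positions (k+1)t for t = 1,…,n and items at 1+(k+1)t for t = 1,…,n (with k > 1), the matching M sending a_t ↦ b_{t−1} for 2 ≤ t ≤ n and a_1 ↦ b_n has total cost (n−1)k + (n−1)(k+1) + 1 = n(2k+1) − 2k and maximum cost (n−1)k + n, while the identity matching a_t ↦ b_t has total cost n and maximum cost 1. Consequently, if the sum-distortion of M equals D = (2k+1) − 2k/n, its max-distortion equals n(D+1)/2. -/
/-! Agents and items alternate on the line with period `k + 1`, each item one unit to the right of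
its agent. The identity matching therefore pays `1` per edge, each shifted edge `a_t ↦ b_{t-1}`
pays `(k + 1) - 1 = k`, and the single wrap-around edge `a_1 ↦ b_n` spans the whole configuration,
so it alone carries almost half of the total cost of the shifted matching. -/

open Finset

lemma abs_mul_sub_one_add_mul (c x : ℝ) : |c * x - (1 + c * x)| = 1 := by
  rw [sub_add_cancel_right, abs_neg, abs_one]

lemma mul_sub_one_add_mul_natPred (c : ℝ) {t : ℕ} (ht : 1 ≤ t) :
    c * t - (1 + c * ↑(t - 1)) = c - 1 := by
  rw [Nat.cast_sub ht]
  ring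

lemma natCast_card_Icc_two {n : ℕ} (hn : 1 ≤ n) : ((#(Icc 2 n) : ℕ) : ℝ) = n - 1 := by
  rw [Nat.card_Icc, show n + 1 - 2 = n - 1 by omega, Nat.cast_sub hn, Nat.cast_one]

lemma mul_sub_div_eq {n : ℝ} (hn : n ≠ 0) (k : ℝ) :
    n * (2 * k + 1) - 2 * k = n * (2 * k + 1 - 2 * k / n) := by
  field_simp

lemma sub_one_mul_add_eq_mul_add_one_div_two {n : ℝ} (hn : n ≠ 0) (k : ℝ) :
    (n - 1) * k + n = n * ((2 * k + 1 - 2 * k / n) + 1) / 2 := by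
  field_simp
  ring

theorem stmt9 (n : ℕ) (k : ℝ) (hn : 2 ≤ n) (hk : 1 < k) :
    let a : ℕ → ℝ := fun t => (k + 1) * t
    let b : ℕ → ℝ := fun t => 1 + (k + 1) * t
    let D : ℝ := (2 * k + 1) - 2 * k / n
    (∀ t ∈ Finset.Icc 1 n, |a t - b t| = 1) ∧
    (∀ t ∈ Finset.Icc 2 n, |a t - b (t - 1)| = k) ∧
    |a 1 - b n| = ((n : ℝ) - 1) * (k + 1) + 1 ∧
    |a 1 - b n| + ∑ t ∈ Finset.Icc 2 n, |a t - b (t - 1)| = n * (2 * k + 1) - 2 * k ∧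
    (n : ℝ) * (2 * k + 1) - 2 * k = n * D ∧
    |a 1 - b n| = ((n : ℝ) - 1) * k + n ∧
    ((n : ℝ) - 1) * k + n = n * (D + 1) / 2 ∧
    (∑ t ∈ Finset.Icc 1 n, |a t - b t| = n) := by
  intro a b D
  have hn1 : (1 : ℝ) ≤ n := by exact_mod_cast (by omega : 1 ≤ n)
  have hn0 : (n : ℝ) ≠ 0 := by positivity
  have h_id : ∀ t ∈ Icc 1 n, |a t - b t| = 1 := fun t _ => abs_mul_sub_one_add_mul _ _
  have h_shift : ∀ t ∈ Icc 2 n, |a t - b (t - 1)| = k := fun t ht => by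
    rw [mul_sub_one_add_mul_natPred _ (by grind), add_sub_cancel_right,
      abs_of_pos (by linarith)]
  have h_wrap : |a 1 - b n| = ((n : ℝ) - 1) * (k + 1) + 1 := by
    rw [show a 1 - b n = -(((n : ℝ) - 1) * (k + 1) + 1) by simp only [a, b]; push_cast; ring,
      abs_neg, abs_of_pos (by nlinarith)]
  have h_shift_sum : ∑ t ∈ Icc 2 n, |a t - b (t - 1)| = ((n : ℝ) - 1) * k := by
    rw [sum_congr rfl h_shift, sum_const, nsmul_eq_mul, natCast_card_Icc_two (by omega)]
  refine ⟨h_id, h_shift, h_wrap, by rw [h_wrap, h_shift_sum]; ring, mul_sub_div_eq hn0 k,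
    by rw [h_wrap]; ring, sub_one_mul_add_eq_mul_add_one_div_two hn0 k, ?_⟩
  rw [sum_congr rfl h_id, sum_const, Nat.card_Icc, add_tsub_cancel_right, nsmul_one]
end

section
/- If positive integers s_i ≥ s_j and nonnegative reals w_i ≤ k·(s_i/k)^c, w_j ≤ k·(s_j/k)^c with c = log₂ 3 and k ≥ 1 (where for s ≤ k we may instead have the bound w ≤ s ≤ k·(s/k)^c), then 2w_j + w_i ≤ k·((s_i + s_j)/k)^c. -/
/-!
Normalising `x + y = 1`, write `x = t ≤ 1/2` and interpolate `u ↦ u ^ c` convexly between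
`0, 1/2` and between `1/2, 1`: this gives `2 t ^ c + (1 - t) ^ c ≤ 1 - 2t + 6t (1/2) ^ c`,
which is at most `1` as soon as `2 ^ c ≥ 3`, i.e. `c ≥ log₂ 3`. The theorem is this inequality
applied to `sj / k ≤ si / k` and multiplied by `k`.
-/

open Set

namespace Real

lemma one_le_of_logb_two_three_le {c : ℝ} (hc : logb 2 3 ≤ c) : 1 ≤ c :=
  le_trans ((le_logb_iff_rpow_le (by norm_num) (by norm_num)).2 (by norm_num)) hc

lemma half_rpow_le_third_of_logb_two_three_le {c : ℝ} (hc : logb 2 3 ≤ c) :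
    (1 / 2 : ℝ) ^ c ≤ 1 / 3 := by
  have h3 : (3 : ℝ) ≤ 2 ^ c := by
    calc (3 : ℝ) = 2 ^ logb 2 3 := (rpow_logb (by norm_num) (by norm_num) (by norm_num)).symm
      _ ≤ 2 ^ c := rpow_le_rpow_of_exponent_le (by norm_num) hc
  rw [div_rpow (by norm_num) (by norm_num), one_rpow]
  gcongr

lemma two_mul_rpow_add_one_sub_rpow_le_one {c t : ℝ} (hc : logb 2 3 ≤ c) (ht0 : 0 ≤ t)
    (ht : t ≤ 1 / 2) : 2 * t ^ c + (1 - t) ^ c ≤ 1 := by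
  have hc0 : c ≠ 0 := (zero_lt_one.trans_le (one_le_of_logb_two_three_le hc)).ne'
  have hconv := convexOn_rpow (one_le_of_logb_two_three_le hc)
  have hhalf : (1 / 2 : ℝ) ∈ Ici 0 := by norm_num
  have ha : 0 ≤ 1 - 2 * t := by linarith
  have hb : 0 ≤ 2 * t := by linarith
  have hlow := hconv.2 (mem_Ici.2 le_rfl) hhalf ha hb (by ring)
  have hhigh := hconv.2 hhalf (mem_Ici.2 zero_le_one) hb ha (by ring)
  simp only [smul_eq_mul, mul_zero, mul_one, zero_add, zero_rpow hc0, one_rpow] at hlow hhigh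
  rw [show 2 * t * (1 / 2 : ℝ) = t by ring] at hlow
  rw [show 2 * t * (1 / 2 : ℝ) + (1 - 2 * t) = 1 - t by ring] at hhigh
  nlinarith [half_rpow_le_third_of_logb_two_three_le hc]

lemma two_mul_rpow_add_rpow_le_add_rpow {c x y : ℝ} (hc : logb 2 3 ≤ c) (hx : 0 ≤ x)
    (hxy : x ≤ y) : 2 * x ^ c + y ^ c ≤ (x + y) ^ c := by
  have hc0 : c ≠ 0 := (zero_lt_one.trans_le (one_le_of_logb_two_three_le hc)).ne'
  rcases (add_nonneg hx (hx.trans hxy)).eq_or_lt with hs | hs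
  · obtain rfl : x = 0 := by linarith
    obtain rfl : y = 0 := by linarith
    simp [zero_rpow hc0]
  set t := x / (x + y)
  have hxt : x = t * (x + y) := (div_mul_cancel₀ x hs.ne').symm
  have hyt : y = (1 - t) * (x + y) := by linear_combination (-1 : ℝ) * hxt
  have ht0 : 0 ≤ t := div_nonneg hx hs.le
  have ht : t ≤ 1 / 2 := by rw [div_le_iff₀ hs]; linarith
  have hxt' : x ^ c = t ^ c * (x + y) ^ c := by rw [← mul_rpow ht0 hs.le, ← hxt]
  have hyt' : y ^ c = (1 - t) ^ c * (x + y) ^ c := by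
    rw [← mul_rpow (by linarith) hs.le, ← hyt]
  calc 2 * x ^ c + y ^ c = (2 * t ^ c + (1 - t) ^ c) * (x + y) ^ c := by
        rw [hxt', hyt']; ring
    _ ≤ 1 * (x + y) ^ c := by
        gcongr; exact two_mul_rpow_add_one_sub_rpow_le_one hc ht0 ht
    _ = (x + y) ^ c := one_mul _

end Real

theorem stmt13_general (k : ℝ) (hk : 1 ≤ k) (si sj : ℕ) (hij : sj ≤ si)
    (wi wj : ℝ)
    (hwi : wi ≤ k * ((si : ℝ) / k) ^ Real.logb 2 3)
    (hwj : wj ≤ k * ((sj : ℝ) / k) ^ Real.logb 2 3) :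
    2 * wj + wi ≤ k * (((si : ℝ) + sj) / k) ^ Real.logb 2 3 := by
  have hk0 : 0 ≤ k := zero_le_one.trans hk
  have hsplit : (sj : ℝ) / k + si / k = (si + sj) / k := by ring
  have hkey := Real.two_mul_rpow_add_rpow_le_add_rpow le_rfl (by positivity)
    (div_le_div_of_nonneg_right (Nat.cast_le.2 hij) hk0)
  rw [hsplit] at hkey
  calc 2 * wj + wi
      ≤ k * (2 * ((sj : ℝ) / k) ^ Real.logb 2 3 + ((si : ℝ) / k) ^ Real.logb 2 3) := by
        linarith
    _ ≤ k * (((si : ℝ) + sj) / k) ^ Real.logb 2 3 := mul_le_mul_of_nonneg_left hkey hk0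

theorem stmt13 (k : ℝ) (hk : 1 ≤ k) (si sj : ℕ) (hsj : 1 ≤ sj) (hij : sj ≤ si)
    (wi wj : ℝ) (hwi0 : 0 ≤ wi) (hwj0 : 0 ≤ wj)
    (hwi : wi ≤ k * ((si : ℝ) / k) ^ Real.logb 2 3)
    (hwj : wj ≤ k * ((sj : ℝ) / k) ^ Real.logb 2 3) :
    2 * wj + wi ≤ k * (((si : ℝ) + sj) / k) ^ Real.logb 2 3 :=
  stmt13_general k hk si sj hij wi wj hwi hwj
end

section
/- In the RepMatch lower bound instance on the real line with n = 2^ℓ agents (one agent at 0, and 2^{t−1} agents at 2^t − 1 for 1 ≤ t ≤ ℓ) and items (one item at −1, and 2^{t−1} items at 2^t − 1 for 1 ≤ t ≤ ℓ): any matching M in which no agent located at 2^ℓ − 1 receives an item located at 2^ℓ − 1 has d(a, M(a)) ≥ 2^{ℓ−1} for every agent a at 2^ℓ − 1; hence cost_k(M) ≥ min(k, 2^{ℓ−1})·2^{ℓ−1} ≥ min(k, 2^{ℓ−1})·(n/2), while the optimal top-k cost is 1. -/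
/-- The top-`k` cost of a vector: the maximum, over subsets of size `k`,
of the sum of the entries in the subset. -/
noncomputable def costk {n : ℕ} (k : ℕ) (v : Fin n → ℝ) : ℝ :=
  sSup {x : ℝ | ∃ S : Finset (Fin n), S.card = k ∧ x = ∑ i ∈ S, v i}

private lemma two_pow_sum (m : ℕ) : ∑ i ∈ Finset.range m, 2 ^ i = 2 ^ m - 1 := by
  induction m with
  | zero => simp
  | succ m ih =>
    rw [Finset.sum_range_succ, ih, pow_succ]
    have : 1 ≤ 2 ^ m := Nat.one_le_two_pow
    omega

private lemma icc_pow_sum (ℓ : ℕ) : ∑ t ∈ Finset.Icc 1 ℓ, 2 ^ (t - 1) = 2 ^ ℓ - 1 := by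
  have h : Finset.Icc 1 ℓ = Finset.Ico 1 (ℓ + 1) := by
    ext t; simp [Finset.mem_Icc, Finset.mem_Ico]
  rw [h, Finset.sum_Ico_eq_sum_range]
  simp only [Nat.add_sub_cancel]
  have h2 : ∀ x ∈ Finset.range ℓ, 2 ^ (1 + x - 1) = 2 ^ x := by
    intro x _; congr 1; omega
  rw [Finset.sum_congr rfl h2]
  exact two_pow_sum ℓ

private lemma pow_inj_real {t s : ℕ} (h : (2 : ℝ) ^ t - 1 = 2 ^ s - 1) : t = s := by
  have h2 : (2 : ℝ) ^ t = 2 ^ s := by linarith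
  have : ((2 ^ t : ℕ) : ℝ) = ((2 ^ s : ℕ) : ℝ) := by push_cast; exact h2
  have := Nat.cast_injective this
  exact Nat.pow_right_injective le_rfl this

private lemma one_le_pow_real {t : ℕ} (ht : 1 ≤ t) : (1 : ℝ) ≤ (2 : ℝ) ^ t - 1 := by
  have : (2 : ℝ) ^ 1 ≤ 2 ^ t := pow_le_pow_right₀ one_le_two ht
  simp at this; linarith

/-- Every position is either the special value `v0` or `2^t - 1` for some `1 ≤ t ≤ ℓ`. -/
private lemma cover {n ℓ : ℕ} (hℓ : 1 ≤ ℓ) (hn : n = 2 ^ ℓ) (p : Fin n → ℝ)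
    (v0 : ℝ) (hv0 : v0 < 1)
    (h0 : (Finset.univ.filter fun i => p i = v0).card = 1)
    (ht : ∀ t, 1 ≤ t → t ≤ ℓ →
      (Finset.univ.filter fun i => p i = 2 ^ t - 1).card = 2 ^ (t - 1)) :
    ∀ i, p i = v0 ∨ ∃ t, 1 ≤ t ∧ t ≤ ℓ ∧ p i = 2 ^ t - 1 := by
  classical
  set U : Finset (Fin n) :=
    (Finset.univ.filter fun i => p i = v0) ∪
      (Finset.Icc 1 ℓ).biUnion (fun t => Finset.univ.filter fun i => p i = 2 ^ t - 1) with hU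
  have hdisj : ∀ t ∈ Finset.Icc 1 ℓ, ∀ s ∈ Finset.Icc 1 ℓ, t ≠ s →
      Disjoint (Finset.univ.filter fun i => p i = (2 : ℝ) ^ t - 1)
        (Finset.univ.filter fun i => p i = (2 : ℝ) ^ s - 1) := by
    intro t _ s _ hts
    rw [Finset.disjoint_filter]
    intro i _ h1 h2
    exact hts (pow_inj_real (h1 ▸ h2))
  have hcard2 : ((Finset.Icc 1 ℓ).biUnion
      (fun t => Finset.univ.filter fun i => p i = 2 ^ t - 1)).card = 2 ^ ℓ - 1 := by
    rw [Finset.card_biUnion hdisj]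
    have hcong : ∀ t ∈ Finset.Icc 1 ℓ,
        (Finset.univ.filter fun i => p i = (2 : ℝ) ^ t - 1).card = 2 ^ (t - 1) := by
      intro t htmem
      rw [Finset.mem_Icc] at htmem
      exact ht t htmem.1 htmem.2
    rw [Finset.sum_congr rfl hcong]
    exact icc_pow_sum ℓ
  have hdisj0 : Disjoint (Finset.univ.filter fun i => p i = v0)
      ((Finset.Icc 1 ℓ).biUnion (fun t => Finset.univ.filter fun i => p i = 2 ^ t - 1)) := by
    rw [Finset.disjoint_biUnion_right]
    intro t htmem
    rw [Finset.mem_Icc] at htmem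
    rw [Finset.disjoint_filter]
    intro i _ h1 h2
    have := one_le_pow_real htmem.1
    rw [h1] at h2; linarith [h2 ▸ hv0]
  have hcardU : U.card = n := by
    rw [hU, Finset.card_union_of_disjoint hdisj0, h0, hcard2, hn]
    have : 1 ≤ 2 ^ ℓ := Nat.one_le_two_pow
    omega
  have hUuniv : U = Finset.univ := by
    apply Finset.eq_univ_of_card
    rw [hcardU, Fintype.card_fin]
  intro i
  have hi : i ∈ U := hUuniv ▸ Finset.mem_univ i
  rw [hU, Finset.mem_union, Finset.mem_biUnion] at hi
  rcases hi with hi | ⟨t, htmem, hi⟩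
  · left; exact (Finset.mem_filter.mp hi).2
  · right
    rw [Finset.mem_Icc] at htmem
    exact ⟨t, htmem.1, htmem.2, (Finset.mem_filter.mp hi).2⟩

theorem stmt16 (ℓ n k : ℕ) (hℓ : 1 ≤ ℓ) (hn : n = 2 ^ ℓ)
    (hk1 : 1 ≤ k) (hkn : k ≤ n)
    (apos ipos : Fin n → ℝ)
    -- one agent at 0, and `2^(t-1)` agents at `2^t - 1` for `1 ≤ t ≤ ℓ`
    (hA0 : (Finset.univ.filter fun i => apos i = 0).card = 1)
    (hAt : ∀ t, 1 ≤ t → t ≤ ℓ →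
      (Finset.univ.filter fun i => apos i = 2 ^ t - 1).card = 2 ^ (t - 1))
    -- one item at -1, and `2^(t-1)` items at `2^t - 1` for `1 ≤ t ≤ ℓ`
    (hB0 : (Finset.univ.filter fun j => ipos j = -1).card = 1)
    (hBt : ∀ t, 1 ≤ t → t ≤ ℓ →
      (Finset.univ.filter fun j => ipos j = 2 ^ t - 1).card = 2 ^ (t - 1))
    (M : Equiv.Perm (Fin n))
    -- no agent located at `2^ℓ - 1` receives an item located at `2^ℓ - 1`
    (hM : ∀ i, apos i = 2 ^ ℓ - 1 → ipos (M i) ≠ 2 ^ ℓ - 1) :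
    (∀ i, apos i = 2 ^ ℓ - 1 → (2 : ℝ) ^ (ℓ - 1) ≤ |apos i - ipos (M i)|) ∧
    min (k : ℝ) ((2 : ℝ) ^ (ℓ - 1)) * (2 : ℝ) ^ (ℓ - 1) ≤
      costk k (fun i => |apos i - ipos (M i)|) ∧
    min (k : ℝ) ((2 : ℝ) ^ (ℓ - 1)) * ((n : ℝ) / 2) ≤
      min (k : ℝ) ((2 : ℝ) ^ (ℓ - 1)) * (2 : ℝ) ^ (ℓ - 1) ∧
    ∃ M' : Equiv.Perm (Fin n), costk k (fun i => |apos i - ipos (M' i)|) ≤ 1 := by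
  classical
  have coverA := cover hℓ hn apos 0 (by norm_num) hA0 hAt
  have coverB := cover hℓ hn ipos (-1) (by norm_num) hB0 hBt
  have h2 : (2 : ℝ) ^ ℓ = 2 * 2 ^ (ℓ - 1) := by
    conv_lhs => rw [show ℓ = (ℓ - 1) + 1 from (Nat.succ_pred_eq_of_pos hℓ).symm]
    ring
  have hpos : (0 : ℝ) < 2 ^ (ℓ - 1) := by positivity
  -- Part 1
  have part1 : ∀ i, apos i = 2 ^ ℓ - 1 → (2 : ℝ) ^ (ℓ - 1) ≤ |apos i - ipos (M i)| := by
    intro i hi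
    rcases coverB (M i) with hB | ⟨t, ht1, htℓ, hB⟩
    · rw [hi, hB]
      rw [abs_of_nonneg (by linarith)]
      linarith
    · have htlt : t ≤ ℓ - 1 := by
        rcases eq_or_lt_of_le htℓ with rfl | h
        · exact absurd hB (hM i hi)
        · omega
      have hle : (2 : ℝ) ^ t ≤ 2 ^ (ℓ - 1) := pow_le_pow_right₀ one_le_two htlt
      rw [hi, hB, abs_of_nonneg (by linarith)]
      linarith
  refine ⟨part1, ?_, ?_, ?_⟩
  · -- Part 2
    set v : Fin n → ℝ := fun i => |apos i - ipos (M i)| with hv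
    have hvnn : ∀ i, 0 ≤ v i := fun i => abs_nonneg _
    have hAcard : (Finset.univ.filter fun i => apos i = (2 : ℝ) ^ ℓ - 1).card = 2 ^ (ℓ - 1) :=
      hAt ℓ hℓ le_rfl
    set m := min k (2 ^ (ℓ - 1)) with hm
    obtain ⟨S, hSA, hScard⟩ := Finset.exists_subset_card_eq
      (show m ≤ (Finset.univ.filter fun i => apos i = (2 : ℝ) ^ ℓ - 1).card by
        rw [hAcard]; exact min_le_right _ _)
    obtain ⟨T, hST, _, hTcard⟩ := Finset.exists_subsuperset_card_eq (n := k)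
      (Finset.subset_univ S)
      (le_trans (le_of_eq hScard) (min_le_left _ _))
      (by rw [Finset.card_univ, Fintype.card_fin]; exact hkn)
    have hsum : (m : ℝ) * 2 ^ (ℓ - 1) ≤ ∑ i ∈ T, v i := by
      have h1 : ∀ i ∈ S, (2 : ℝ) ^ (ℓ - 1) ≤ v i := by
        intro i hiS
        have := Finset.mem_filter.mp (hSA hiS)
        exact part1 i this.2
      have h2' : S.card • ((2 : ℝ) ^ (ℓ - 1)) ≤ ∑ i ∈ S, v i :=
        Finset.card_nsmul_le_sum S v _ h1
      rw [hScard, nsmul_eq_mul] at h2'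
      have h3 : ∑ i ∈ S, v i ≤ ∑ i ∈ T, v i :=
        Finset.sum_le_sum_of_subset_of_nonneg hST (fun i _ _ => hvnn i)
      linarith
    have hbdd : BddAbove {x : ℝ | ∃ S : Finset (Fin n), S.card = k ∧ x = ∑ i ∈ S, v i} := by
      have hsub : {x : ℝ | ∃ S : Finset (Fin n), S.card = k ∧ x = ∑ i ∈ S, v i} ⊆
          Set.range (fun S : Finset (Fin n) => ∑ i ∈ S, v i) := by
        rintro x ⟨S, _, rfl⟩; exact ⟨S, rfl⟩
      exact (Set.finite_range _).bddAbove.mono hsub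
    have hmem : (∑ i ∈ T, v i) ∈
        {x : ℝ | ∃ S : Finset (Fin n), S.card = k ∧ x = ∑ i ∈ S, v i} :=
      ⟨T, hTcard, rfl⟩
    have hcast : min (k : ℝ) ((2 : ℝ) ^ (ℓ - 1)) = (m : ℝ) := by
      rw [hm]
      push_cast [Nat.cast_min]
      norm_num
    rw [hcast]
    calc (m : ℝ) * 2 ^ (ℓ - 1) ≤ ∑ i ∈ T, v i := hsum
      _ ≤ costk k v := le_csSup hbdd hmem
  · -- Part 3
    apply le_of_eq
    congr 1
    rw [hn]
    push_cast
    rw [h2]; ring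
  · -- Part 4
    set g : Fin n → ℝ := fun j => if ipos j = -1 then (0 : ℝ) else ipos j with hg
    have hfib : ∀ c : ℝ, (Finset.univ.filter fun i => apos i = c).card =
        (Finset.univ.filter fun j => g j = c).card := by
      intro c
      by_cases hc0 : c = 0
      · subst hc0
        have heq : (Finset.univ.filter fun j => g j = 0) =
            (Finset.univ.filter fun j => ipos j = -1) := by
          ext j
          simp only [Finset.mem_filter, Finset.mem_univ, true_and, hg]
          constructor
          · intro h
            by_contra hne
            rw [if_neg hne] at h
            rcases coverB j with h' | ⟨t, ht1, _, h'⟩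
            · exact hne h'
            · rw [h'] at h; have := one_le_pow_real ht1; linarith
          · intro h; rw [if_pos h]
        rw [heq, hA0, hB0]
      by_cases hct : ∃ t, 1 ≤ t ∧ t ≤ ℓ ∧ c = (2 : ℝ) ^ t - 1
      · obtain ⟨t, ht1, htℓ, rfl⟩ := hct
        have h1t := one_le_pow_real ht1
        have heq : (Finset.univ.filter fun j => g j = (2 : ℝ) ^ t - 1) =
            (Finset.univ.filter fun j => ipos j = (2 : ℝ) ^ t - 1) := by
          ext j
          simp only [Finset.mem_filter, Finset.mem_univ, true_and, hg]
          by_cases hj : ipos j = -1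
          · rw [if_pos hj, hj]
            constructor <;> intro h <;> linarith
          · rw [if_neg hj]
        rw [heq, hAt t ht1 htℓ, hBt t ht1 htℓ]
      · have hea : (Finset.univ.filter fun i => apos i = c) = ∅ := by
          rw [Finset.filter_eq_empty_iff]
          intro i _ h
          rcases coverA i with h' | ⟨t, ht1, htℓ, h'⟩
          · exact hc0 (h ▸ h')
          · exact hct ⟨t, ht1, htℓ, h ▸ h'⟩
        have heb : (Finset.univ.filter fun j => g j = c) = ∅ := by
          rw [Finset.filter_eq_empty_iff]
          intro j _ h
          replace h : (if ipos j = -1 then (0 : ℝ) else ipos j) = c := h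
          by_cases hj : ipos j = -1
          · rw [if_pos hj] at h; exact hc0 h.symm
          · rw [if_neg hj] at h
            rcases coverB j with h' | ⟨t, ht1, htℓ, h'⟩
            · exact hj h'
            · exact hct ⟨t, ht1, htℓ, h ▸ h'⟩
        rw [hea, heb]
    have e : ∀ c : ℝ, { i : Fin n // apos i = c } ≃ { j : Fin n // g j = c } := by
      intro c
      apply Fintype.equivOfCardEq
      rw [Fintype.card_subtype, Fintype.card_subtype, hfib c]
    set M' : Equiv.Perm (Fin n) := Equiv.ofFiberEquiv e with hM'
    have hmap : ∀ i, g (M' i) = apos i := fun i => Equiv.ofFiberEquiv_map e i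
    refine ⟨M', ?_⟩
    set w : Fin n → ℝ := fun i => if ipos (M' i) = -1 then (1 : ℝ) else 0 with hw
    have hvw : ∀ i, |apos i - ipos (M' i)| ≤ w i := by
      intro i
      have hgi : (if ipos (M' i) = -1 then (0 : ℝ) else ipos (M' i)) = apos i := hmap i
      show |apos i - ipos (M' i)| ≤ if ipos (M' i) = -1 then (1 : ℝ) else 0
      by_cases hj : ipos (M' i) = -1
      · rw [if_pos hj] at hgi ⊢
        rw [hj, ← hgi]
        norm_num
      · rw [if_neg hj] at hgi ⊢
        rw [← hgi, sub_self, abs_zero]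
    have hwsum : ∑ i, w i = 1 := by
      have h1 : ∑ i, w i = ∑ j, if ipos j = -1 then (1 : ℝ) else 0 :=
        Fintype.sum_bijective M' M'.bijective w
          (fun j => if ipos j = -1 then (1 : ℝ) else 0) (fun i => rfl)
      rw [h1, Finset.sum_boole, hB0]; norm_num
    apply csSup_le
    · obtain ⟨S, _, hScard⟩ := Finset.exists_subset_card_eq
        (show k ≤ (Finset.univ : Finset (Fin n)).card by
          rw [Finset.card_univ, Fintype.card_fin]; exact hkn)
      exact ⟨∑ i ∈ S, |apos i - ipos (M' i)|, S, hScard, rfl⟩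
    · rintro x ⟨S, _, rfl⟩
      calc ∑ i ∈ S, |apos i - ipos (M' i)| ≤ ∑ i ∈ S, w i :=
            Finset.sum_le_sum (fun i _ => hvw i)
        _ ≤ ∑ i, w i := Finset.sum_le_sum_of_subset_of_nonneg (Finset.subset_univ S)
            (fun i _ _ => by rw [hw]; positivity)
        _ = 1 := hwsum
end

section
/- For the Serial Dictatorship lower bound instance: n agents at positions {1} ∪ {2^t : 1 ≤ t ≤ n−1} and n items at positions {−ε} ∪ {2^t : 1 ≤ t ≤ n−1} on the real line (0 < ε < 1), if agents are processed in increasing distance to 0 and each takes the nearest unassigned item (preferring collocated items, with the agent at 1 preferring the item at 2 over the item at −ε since |1−2| = 1 < 1+ε), then the agent at 2^{n−1} is matched to the item at −ε, incurring cost 2^{n−1} + ε, while the optimal max-cost matching has maximum cost 1 + ε. -/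
theorem stmt17 (n : ℕ) (hn : 2 ≤ n) (ε : ℝ) (hε0 : 0 < ε) (hε1 : ε < 1) :
    let pa : Fin n → ℝ := fun i => if (i : ℕ) = 0 then 1 else 2 ^ (i : ℕ)
    let pb : Fin n → ℝ := fun j => if (j : ℕ) = 0 then -ε else 2 ^ (j : ℕ)
    ∀ M : Equiv.Perm (Fin n),
      -- serial dictatorship in index order (increasing distance to 0):
      -- each agent's assigned item is at least as close as any item
      -- not taken by an earlier agent
      (∀ i j : Fin n, (∀ i' : Fin n, i' < i → M i' ≠ j) →
        |pa i - pb (M i)| ≤ |pa i - pb j|) →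
      (pb (M ⟨n - 1, by omega⟩) = -ε ∧
        |pa ⟨n - 1, by omega⟩ - pb (M ⟨n - 1, by omega⟩)| = 2 ^ (n - 1) + ε) ∧
      ∃ M' : Equiv.Perm (Fin n), ∀ i, |pa i - pb (M' i)| ≤ 1 + ε := by
  intro pa pb M hSD
  have hpa : ∀ i : Fin n, pa i = 2 ^ (i : ℕ) := by
    intro i
    by_cases h : (i : ℕ) = 0 <;> simp [pa, h]
  have key : ∀ k, (hk : k < n - 1) → M ⟨k, by omega⟩ = ⟨k + 1, by omega⟩ := by
    intro k
    induction k using Nat.strong_induction_on with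
    | _ k ih =>
      intro hk
      have havail : ∀ i' : Fin n, i' < (⟨k, by omega⟩ : Fin n) →
          M i' ≠ (⟨k + 1, by omega⟩ : Fin n) := by
        intro i' hi' hEq
        have hlt : (i' : ℕ) < k := hi'
        have h2 : M i' = (⟨(i' : ℕ) + 1, by omega⟩ : Fin n) :=
          ih (i' : ℕ) hlt (by omega)
        rw [h2] at hEq
        have := congrArg Fin.val hEq
        simp at this
        omega
      have hb := hSD ⟨k, by omega⟩ ⟨k + 1, by omega⟩ havail
      rw [hpa] at hb
      simp only at hb
      have hpb1 : pb ⟨k + 1, by omega⟩ = 2 ^ (k + 1) := by simp [pb]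
      rw [hpb1] at hb
      have hRHS : |(2 : ℝ) ^ k - 2 ^ (k + 1)| = 2 ^ k := by
        rw [abs_sub_comm, abs_of_nonneg]
        · rw [pow_succ]; ring
        · rw [pow_succ]
          have : (0:ℝ) < 2 ^ k := by positivity
          linarith
      rw [hRHS] at hb
      set m : ℕ := ((M ⟨k, by omega⟩ : Fin n) : ℕ) with hm
      have hmn : m < n := (M ⟨k, by omega⟩).isLt
      by_cases h0 : m = 0
      · exfalso
        have hpb0 : pb (M ⟨k, by omega⟩) = -ε := by simp [pb, ← hm, h0]
        rw [hpb0] at hb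
        have hpos : (0:ℝ) < 2 ^ k := by positivity
        rw [abs_of_pos (by linarith)] at hb
        linarith
      by_cases hle : m ≤ k
      · exfalso
        have h2 : M ⟨m - 1, by omega⟩ = (⟨m, by omega⟩ : Fin n) := by
          rw [ih (m - 1) (by omega) (by omega)]; exact Fin.ext (by simp; omega)
        have h3 : M ⟨k, by omega⟩ = (⟨m, by omega⟩ : Fin n) := by
          apply Fin.ext; exact hm.symm
        have := M.injective (h2.trans h3.symm)
        have := congrArg Fin.val this
        simp at this
        omega
      by_cases heq : m = k + 1
      · apply Fin.ext
        simpa using heq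
      · exfalso
        have hge : k + 2 ≤ m := by omega
        have hpbm : pb (M ⟨k, by omega⟩) = 2 ^ m := by simp [pb, ← hm, h0]
        rw [hpbm] at hb
        have hpow2 : (2:ℝ) ^ (k + 2) ≤ 2 ^ m :=
          pow_le_pow_right₀ (by norm_num) hge
        have hpos : (0:ℝ) < 2 ^ k := by positivity
        have hLHS : |(2:ℝ) ^ k - 2 ^ m| = 2 ^ m - 2 ^ k := by
          rw [abs_sub_comm, abs_of_nonneg]
          have : (2:ℝ) ^ k ≤ 2 ^ (k + 2) := pow_le_pow_right₀ (by norm_num) (by omega)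
          linarith
        rw [hLHS] at hb
        have h4 : (2:ℝ) ^ (k + 2) = 4 * 2 ^ k := by rw [pow_add]; ring
        linarith
  have hlast : M ⟨n - 1, by omega⟩ = (⟨0, by omega⟩ : Fin n) := by
    by_contra hne
    set m : ℕ := ((M ⟨n - 1, by omega⟩ : Fin n) : ℕ) with hm
    have hmn : m < n := (M ⟨n - 1, by omega⟩).isLt
    have h0 : m ≠ 0 := by
      intro h
      exact hne (Fin.ext (by simpa [← hm] using h))
    have h2 : M ⟨m - 1, by omega⟩ = (⟨m, by omega⟩ : Fin n) := by
      rw [key (m - 1) (by omega)]; exact Fin.ext (by simp; omega)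
    have h3 : M ⟨n - 1, by omega⟩ = (⟨m, by omega⟩ : Fin n) := by
      apply Fin.ext; exact hm.symm
    have := M.injective (h2.trans h3.symm)
    have := congrArg Fin.val this
    simp at this
    omega
  have hpb0 : pb (M ⟨n - 1, by omega⟩) = -ε := by rw [hlast]; simp [pb]
  refine ⟨⟨hpb0, ?_⟩, ?_⟩
  · rw [hpb0, hpa]
    simp only
    have hpos : (0:ℝ) < 2 ^ (n - 1) := by positivity
    rw [abs_of_pos (by linarith)]
    ring
  · refine ⟨Equiv.refl _, fun i => ?_⟩
    simp only [Equiv.refl_apply]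
    by_cases h : (i : ℕ) = 0
    · simp only [pa, pb, h, if_pos]
      rw [sub_neg_eq_add, abs_of_pos (by linarith)]
    · simp only [pa, pb, if_neg h, sub_self, abs_zero]
      linarith
end
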